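/- arXiv:2405.03552 — 5 statements merged into one kernel-verified Lean document; each statement's English description precedes it below -/
import Mathlib

section
/- Let a, b, c, d be nonnegative integers with ad − bc = 1 and β a nonnegative integer. Then max{a,b}² + βab − min{a,b}² divides ψ_β(max{ac, bd} + βbc − min{ac, bd}), where ψ_β(n) = n² + βn − 1. -/
/-!
Modulo `ad - bc - 1` one has the polynomial identity
`ψ_β(bd + βbc - ac) = (b² + βab - a²)(d² - c² + βcd)`,
so the divisibility holds over any commutative ring. When `a ≤ b` (hence `ac ≤ bd`) this is
the claim; when `b < a` (hence `bd ≤ ac`) the claim is the same identity at `-β`, because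
`ψ_{-β}(-n) = ψ_β(n)`.
-/

section

variable {R : Type*} [CommRing R]

def psi (β n : R) : R := n ^ 2 + β * n - 1

theorem psi_neg_neg (β n : R) : psi (-β) (-n) = psi β n := by
  unfold psi; ring

theorem dvd_psi_of_mul_eq_mul_add_one {a b c d : R} (β : R) (h : a * d = b * c + 1) :
    b ^ 2 + β * a * b - a ^ 2 ∣ psi β (b * d + β * b * c - a * c) :=
  ⟨d ^ 2 - c ^ 2 + β * c * d, by
    unfold psi
    linear_combination (1 - b * d * β - b * c - b * c * β ^ 2 + a * d + a * c * β) * h⟩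

theorem dvd_psi_of_mul_eq_mul_add_one' {a b c d : R} (β : R) (h : a * d = b * c + 1) :
    a ^ 2 + β * a * b - b ^ 2 ∣ psi β (a * c + β * b * c - b * d) := by
  have key := dvd_psi_of_mul_eq_mul_add_one (-β) h
  rw [← neg_dvd, ← psi_neg_neg]
  convert key using 2 <;> ring

end

theorem Nat.mul_le_mul_of_le_of_mul_eq_mul_add_one {a b c d : ℕ} (hab : a ≤ b)
    (h : a * d = b * c + 1) : a * c ≤ b * d := by
  rcases Nat.eq_zero_or_pos a with rfl | ha
  · simp
  · -- `a (bd) = b (bc + 1) ≥ b² c ≥ a² c`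
    refine Nat.le_of_mul_le_mul_left ?_ ha
    nlinarith [Nat.mul_le_mul hab hab]

theorem Nat.mul_le_mul_of_lt_of_mul_eq_mul_add_one {a b c d : ℕ} (hba : b < a)
    (h : a * d = b * c + 1) : b * d ≤ a * c := by
  rcases Nat.eq_zero_or_pos c with rfl | hc
  · have hb : b = 0 := by
      have : a = 1 := Nat.eq_one_of_mul_eq_one_right (by simpa using h)
      omega
    simp [hb]
  · -- `a (bd) = b (bc + 1) ≤ b² c + c ≤ a² c`, using `b² + 1 ≤ a²`
    refine Nat.le_of_mul_le_mul_left ?_ (Nat.zero_lt_of_lt hba)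
    nlinarith [Nat.mul_le_mul hba hba]

theorem psi_beta_well_defined (a b c d β : ℕ) (hdet : a*d = b*c + 1) :
    ((max a b : ℤ)^2 + (β:ℤ)*a*b - (min a b : ℤ)^2) ∣
      (((max (a*c) (b*d) : ℤ) + (β:ℤ)*b*c - (min (a*c) (b*d) : ℤ))^2
        + (β:ℤ) * ((max (a*c) (b*d) : ℤ) + (β:ℤ)*b*c - (min (a*c) (b*d) : ℤ)) - 1) := by
  have hdetℤ : (a : ℤ) * d = b * c + 1 := by exact_mod_cast hdet
  rcases le_or_gt a b with hab | hba
  · have hcd : (a : ℤ) * c ≤ b * d := by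
      exact_mod_cast Nat.mul_le_mul_of_le_of_mul_eq_mul_add_one hab hdet
    rw [max_eq_right (by exact_mod_cast hab), min_eq_left (by exact_mod_cast hab),
      max_eq_right hcd, min_eq_left hcd]
    exact dvd_psi_of_mul_eq_mul_add_one (β : ℤ) hdetℤ
  · have hcd : (b : ℤ) * d ≤ a * c := by
      exact_mod_cast Nat.mul_le_mul_of_lt_of_mul_eq_mul_add_one hba hdet
    rw [max_eq_left (by exact_mod_cast hba.le), min_eq_right (by exact_mod_cast hba.le),
      max_eq_left hcd, min_eq_right hcd]
    exact dvd_psi_of_mul_eq_mul_add_one' (β : ℤ) hdetℤ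
end

section
/- For every nonnegative integer n, the number of matrices [[a,b],[c,d]] in SL₂(ℕ₀) with ac + bd = n equals τ(n² + 1), the number of positive divisors of n² + 1. -/
open Zsqrtd GaussianInt
set_option synthInstance.maxHeartbeats 400000

namespace CountSL2Aux

lemma star_dvd {a b : GaussianInt} (h : a ∣ b) : star a ∣ star b := by
  obtain ⟨c, rfl⟩ := h; exact ⟨star c, by rw [star_mul']⟩

lemma norm_dvd {a b : GaussianInt} (h : a ∣ b) : a.norm ∣ b.norm := by
  obtain ⟨c, rfl⟩ := h; exact ⟨c.norm, Zsqrtd.norm_mul a c⟩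

lemma unit_norm {u : GaussianInt} (hu : IsUnit u) : u.norm = 1 :=
  (Zsqrtd.norm_eq_one_iff' (by norm_num) u).mpr hu

lemma norm_eq_of_associated {a b : GaussianInt} (h : Associated a b) : a.norm = b.norm := by
  obtain ⟨u, rfl⟩ := h
  rw [Zsqrtd.norm_mul, unit_norm u.isUnit, mul_one]

/-- If `2 * u.re` is coprime to `norm u` in `ℤ`, then `u` is coprime to `star u`. -/
lemma isCoprime_star {u : GaussianInt} (h : IsCoprime (2 * u.re) u.norm) :
    IsCoprime u (star u) := by
  classical
  rw [← EuclideanDomain.gcd_isUnit_iff]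
  set g := EuclideanDomain.gcd u (star u) with hg
  have h1 : g ∣ u := EuclideanDomain.gcd_dvd_left _ _
  have h2 : g ∣ star u := EuclideanDomain.gcd_dvd_right _ _
  have hsum : u + star u = ((2 * u.re : ℤ) : GaussianInt) := by
    ext <;> simp [Zsqrtd.re_star, Zsqrtd.im_star] <;> ring
  have h3 : g ∣ ((2 * u.re : ℤ) : GaussianInt) := hsum ▸ dvd_add h1 h2
  have h4 : g.norm ∣ (2 * u.re) * (2 * u.re) := by
    have := norm_dvd h3
    rwa [Zsqrtd.norm_intCast] at this
  have h5 : g.norm ∣ u.norm := norm_dvd h1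
  have h6 : IsUnit g.norm := (h.mul_left h).isUnit_of_dvd' h4 h5
  rw [← Zsqrtd.norm_eq_one_iff' (by norm_num : (-1:ℤ) ≤ 0) g]
  rcases Int.isUnit_iff.mp h6 with h' | h'
  · exact h'
  · have := Zsqrtd.norm_nonneg (by norm_num : (-1:ℤ) ≤ 0) g
    omega

lemma exists_dvd_norm_eq {u : GaussianInt} (hc : IsCoprime u (star u)) {q : ℤ}
    (hq0 : 0 ≤ q) (hq : q ∣ u.norm) : ∃ w : GaussianInt, w ∣ u ∧ w.norm = q := by
  classical
  obtain ⟨r, hr⟩ := hq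
  set w := EuclideanDomain.gcd ((q : ℤ) : GaussianInt) u with hw
  have hwq : w ∣ ((q : ℤ) : GaussianInt) := EuclideanDomain.gcd_dvd_left _ _
  have hwu : w ∣ u := EuclideanDomain.gcd_dvd_right _ _
  refine ⟨w, hwu, ?_⟩
  set A := EuclideanDomain.gcdA ((q : ℤ) : GaussianInt) u with hA
  set B := EuclideanDomain.gcdB ((q : ℤ) : GaussianInt) u with hB
  have hb : w = ((q : ℤ) : GaussianInt) * A + u * B := EuclideanDomain.gcd_eq_gcd_ab _ _
  have huu : u * star u = ((q : ℤ) : GaussianInt) * ((r : ℤ) : GaussianInt) := by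
    rw [← Zsqrtd.norm_eq_mul_conj, hr]; push_cast; ring
  -- q ∣ norm w
  have hqd : ((q : ℤ) : GaussianInt) ∣ ((w.norm : ℤ) : GaussianInt) := by
    refine ⟨((q : ℤ) : GaussianInt) * (A * star A) + A * (star u * star B)
      + star A * (u * B) + ((r : ℤ) : GaussianInt) * (B * star B), ?_⟩
    rw [Zsqrtd.norm_eq_mul_conj]
    nth_rewrite 1 [hb]
    rw [hb]
    simp only [star_add, star_mul']
    rw [star_intCast]
    linear_combination (B * star B) * huu
  have hqd' : q ∣ w.norm := (Zsqrtd.intCast_dvd_intCast _ _).mp hqd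
  -- norm w ∣ q
  have hcop : IsCoprime w (star w) :=
    (hc.of_isCoprime_of_dvd_left hwu).of_isCoprime_of_dvd_right (star_dvd hwu)
  have hsq : star w ∣ ((q : ℤ) : GaussianInt) := by
    have := star_dvd hwq
    rwa [star_intCast] at this
  have hnd : ((w.norm : ℤ) : GaussianInt) ∣ ((q : ℤ) : GaussianInt) := by
    rw [Zsqrtd.norm_eq_mul_conj]
    exact hcop.mul_dvd hwq hsq
  have hnd' : w.norm ∣ q := (Zsqrtd.intCast_dvd_intCast _ _).mp hnd
  exact Int.dvd_antisymm (Zsqrtd.norm_nonneg (by norm_num) w) hq0 hnd' hqd'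

lemma assoc_of_norm_eq {u w w' : GaussianInt} (hc : IsCoprime u (star u))
    (hw : w ∣ u) (hw' : w' ∣ u) (h : w.norm = w'.norm) : Associated w w' := by
  have key : ∀ {x y : GaussianInt}, x ∣ u → y ∣ u → x.norm = y.norm → y ∣ x := by
    intro x y hx hy hxy
    have c1 : IsCoprime y (star x) :=
      (hc.of_isCoprime_of_dvd_left hy).of_isCoprime_of_dvd_right (star_dvd hx)
    have d1 : y ∣ x * star x := by
      rw [← Zsqrtd.norm_eq_mul_conj, hxy, Zsqrtd.norm_eq_mul_conj]
      exact Dvd.intro _ rfl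
    exact c1.dvd_of_dvd_mul_right d1
  exact associated_of_dvd_dvd (key hw' hw h.symm) (key hw hw' h)

lemma prime_pi : Prime (⟨1, 1⟩ : GaussianInt) := by
  rw [← irreducible_iff_prime]
  constructor
  · intro hu
    have := unit_norm hu
    norm_num [Zsqrtd.norm] at this
  · intro s t hst
    have hn : s.norm * t.norm = 2 := by
      rw [← Zsqrtd.norm_mul, ← hst]; norm_num [Zsqrtd.norm]
    have h2 : s.norm.natAbs * t.norm.natAbs = 2 := by
      rw [← Int.natAbs_mul, hn]; rfl
    have hdvd : s.norm.natAbs ∣ 2 := ⟨_, h2.symm⟩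
    rcases (Nat.prime_two).eq_one_or_self_of_dvd _ hdvd with h' | h'
    · exact Or.inl (Zsqrtd.norm_eq_one_iff.mp h')
    · rw [h'] at h2
      have : t.norm.natAbs = 1 := by omega
      exact Or.inr (Zsqrtd.norm_eq_one_iff.mp this)

def zn (n : ℕ) : GaussianInt := ⟨1, (n : ℤ)⟩

lemma norm_zn (n : ℕ) : (zn n).norm = (n:ℤ)^2 + 1 := by
  simp [zn, Zsqrtd.norm]; ring

lemma cop_even {n : ℕ} (hn : n % 2 = 0) : IsCoprime (zn n) (star (zn n)) := by
  apply isCoprime_star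
  obtain ⟨m, rfl⟩ : ∃ m:ℕ, n = 2*m := ⟨n/2, by omega⟩
  have h1 : (zn (2*m)).re = 1 := rfl
  rw [h1, norm_zn]
  exact ⟨-(2*(m:ℤ)*m), 1, by push_cast; ring⟩

def z0 (m : ℕ) : GaussianInt := ⟨(m:ℤ)+1, (m:ℤ)⟩

lemma norm_z0 (m : ℕ) : (z0 m).norm = 2*(m:ℤ)*((m:ℤ)+1) + 1 := by
  simp [z0, Zsqrtd.norm]; ring

lemma cop_odd (m : ℕ) : IsCoprime (z0 m) (star (z0 m)) := by
  apply isCoprime_star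
  have h1 : (z0 m).re = (m:ℤ)+1 := rfl
  rw [h1, norm_z0]
  exact ⟨-(m:ℤ), 1, by ring⟩

lemma pi_ne_zero : (⟨1,1⟩ : GaussianInt) ≠ 0 := by
  simp [Zsqrtd.ext_iff]

lemma norm_pi : (⟨1,1⟩ : GaussianInt).norm = 2 := by norm_num [Zsqrtd.norm]

lemma z_eq_odd {n m : ℕ} (h : n = 2*m+1) : zn n = ⟨1,1⟩ * z0 m := by
  subst h
  ext <;> simp [zn, z0, Zsqrtd.re_mul, Zsqrtd.im_mul] <;> push_cast <;> ring

lemma lemA (n : ℕ) {w w' : GaussianInt} (hw : w ∣ zn n) (hw' : w' ∣ zn n)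
    (h : w.norm = w'.norm) : Associated w w' := by
  rcases Nat.even_or_odd n with he | ho
  · exact assoc_of_norm_eq (cop_even (Nat.even_iff.mp he)) hw hw' h
  · obtain ⟨m, hm⟩ := ho
    have hz : zn n = ⟨1,1⟩ * z0 m := z_eq_odd hm
    have hdec : ∀ {x : GaussianInt}, x ∣ zn n →
        (∃ x₁, x₁ ∣ z0 m ∧ x = ⟨1,1⟩ * x₁) ∨ (x ∣ z0 m) := by
      intro x hx
      by_cases hpi : (⟨1,1⟩ : GaussianInt) ∣ x
      · obtain ⟨x₁, rfl⟩ := hpi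
        left
        refine ⟨x₁, ?_, rfl⟩
        rw [hz] at hx
        exact (mul_dvd_mul_iff_left pi_ne_zero).mp hx
      · right
        have hcop := (prime_pi.coprime_iff_not_dvd.mpr hpi).symm
        rw [hz, mul_comm] at hx
        exact hcop.dvd_of_dvd_mul_right hx
    have hoddnorm : ∀ {x : GaussianInt}, x ∣ z0 m → ¬ ((2:ℤ) ∣ x.norm) := by
      intro x hx h2
      have h3 : (2:ℤ) ∣ (z0 m).norm := h2.trans (norm_dvd hx)
      rw [norm_z0, mul_assoc] at h3
      generalize (m:ℤ)*((m:ℤ)+1) = t at h3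
      omega
    rcases hdec hw with ⟨w₁, hw₁, rfl⟩ | hwz <;> rcases hdec hw' with ⟨w₁', hw₁', rfl⟩ | hwz'
    · have : w₁.norm = w₁'.norm := by
        have h2 := h
        rw [Zsqrtd.norm_mul, Zsqrtd.norm_mul, norm_pi] at h2
        omega
      exact (assoc_of_norm_eq (cop_odd m) hw₁ hw₁' this).mul_left _
    · exfalso
      refine hoddnorm hwz' ?_
      rw [← h, Zsqrtd.norm_mul, norm_pi]
      exact ⟨w₁.norm, rfl⟩
    · exfalso
      refine hoddnorm hwz ?_
      rw [h, Zsqrtd.norm_mul, norm_pi]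
      exact ⟨w₁'.norm, rfl⟩
    · exact assoc_of_norm_eq (cop_odd m) hwz hwz' h

lemma lemB (n : ℕ) {q : ℕ} (hq : (q:ℤ) ∣ ((n:ℤ)^2+1)) :
    ∃ w : GaussianInt, w ∣ zn n ∧ w.norm = (q:ℤ) := by
  rcases Nat.even_or_odd n with he | ho
  · exact exists_dvd_norm_eq (cop_even (Nat.even_iff.mp he)) (by positivity)
      (by rw [norm_zn]; exact hq)
  · obtain ⟨m, hm⟩ := ho
    have hz : zn n = ⟨1,1⟩ * z0 m := z_eq_odd hm
    have hnorm : ((n:ℤ)^2+1) = 2 * (z0 m).norm := by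
      rw [norm_z0]; subst hm; push_cast; ring
    rw [hnorm] at hq
    by_cases h2 : 2 ∣ q
    · obtain ⟨q₀, rfl⟩ := h2
      have hq₀ : (q₀:ℤ) ∣ (z0 m).norm := by
        push_cast at hq
        exact (mul_dvd_mul_iff_left (two_ne_zero (α := ℤ))).mp hq
      obtain ⟨w₀, hw₀, hn₀⟩ := exists_dvd_norm_eq (cop_odd m) (by positivity) hq₀
      refine ⟨⟨1,1⟩ * w₀, by rw [hz]; exact mul_dvd_mul_left _ hw₀, ?_⟩
      rw [Zsqrtd.norm_mul, norm_pi, hn₀]; push_cast; ring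
    · have hcop : IsCoprime ((q:ℤ)) 2 := by
        obtain ⟨t, ht⟩ : ∃ t, q = 2*t+1 := ⟨q/2, by omega⟩
        exact ⟨1, -(t:ℤ), by subst ht; push_cast; ring⟩
      have hqn : (q:ℤ) ∣ (z0 m).norm := by
        rw [mul_comm] at hq
        exact hcop.dvd_of_dvd_mul_right hq
      obtain ⟨w, hw, hn⟩ := exists_dvd_norm_eq (cop_odd m) (by positivity) hqn
      exact ⟨w, hw.trans (Dvd.intro_left _ hz.symm), hn⟩

def Normd (w : GaussianInt) : Prop := 1 ≤ w.re ∧ 0 ≤ w.im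

lemma exists_normd {w : GaussianInt} (h : w ≠ 0) : ∃ w', Associated w w' ∧ Normd w' := by
  have hne : ¬ (w.re = 0 ∧ w.im = 0) := by
    intro hc
    exact h (by ext <;> simp [hc.1, hc.2])
  have hiu : IsUnit (⟨0,1⟩ : GaussianInt) :=
    IsUnit.of_mul_eq_one ⟨0,-1⟩ (by ext <;> simp [Zsqrtd.re_mul, Zsqrtd.im_mul])
  have hiu' : IsUnit (⟨0,-1⟩ : GaussianInt) :=
    IsUnit.of_mul_eq_one ⟨0,1⟩ (by ext <;> simp [Zsqrtd.re_mul, Zsqrtd.im_mul])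
  have hmi : w * ⟨0,1⟩ = ⟨-w.im, w.re⟩ := by
    ext <;> simp [Zsqrtd.re_mul, Zsqrtd.im_mul]
  have hmi' : w * ⟨0,-1⟩ = ⟨w.im, -w.re⟩ := by
    ext <;> simp [Zsqrtd.re_mul, Zsqrtd.im_mul]
  by_cases h1 : 1 ≤ w.re ∧ 0 ≤ w.im
  · exact ⟨w, Associated.refl w, h1⟩
  by_cases h2 : 1 ≤ w.im ∧ w.re ≤ 0
  · refine ⟨⟨w.im, -w.re⟩, ?_, by constructor <;> simp <;> omega⟩
    exact hmi' ▸ (associated_mul_unit_left w _ hiu').symm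
  by_cases h3 : w.re ≤ -1 ∧ w.im ≤ 0
  · refine ⟨-w, ⟨-1, by simp⟩, by constructor <;> simp <;> omega⟩
  · have h4 : w.im ≤ -1 ∧ 0 ≤ w.re := by omega
    refine ⟨⟨-w.im, w.re⟩, ?_, by constructor <;> simp <;> omega⟩
    exact hmi ▸ (associated_mul_unit_left w _ hiu).symm

lemma normd_unique {w w' : GaussianInt} (h : Associated w w')
    (h1 : Normd w) (h2 : Normd w') : w = w' := by
  obtain ⟨u, hu⟩ := h
  have hxy : (u:GaussianInt).re * (u:GaussianInt).re
      + (u:GaussianInt).im * (u:GaussianInt).im = 1 := by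
    have := unit_norm u.isUnit
    simp only [Zsqrtd.norm] at this
    linarith
  have hre : w'.re = w.re * (u:GaussianInt).re - w.im * (u:GaussianInt).im := by
    rw [← hu]; simp [Zsqrtd.re_mul]; try ring
  have him : w'.im = w.re * (u:GaussianInt).im + w.im * (u:GaussianInt).re := by
    rw [← hu]; simp [Zsqrtd.im_mul]; try ring
  obtain ⟨ha, hb⟩ := h1
  obtain ⟨hc, hd⟩ := h2
  have hcomp : w.re = w'.re ∧ w.im = w'.im := by
    generalize hx : (u:GaussianInt).re = x at hxy hre him
    generalize hy : (u:GaussianInt).im = y at hxy hre him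
    have hbx : -1 ≤ x ∧ x ≤ 1 := by constructor <;> nlinarith [mul_self_nonneg y]
    have hby : -1 ≤ y ∧ y ≤ 1 := by constructor <;> nlinarith [mul_self_nonneg x]
    obtain ⟨hbx1, hbx2⟩ := hbx
    obtain ⟨hby1, hby2⟩ := hby
    interval_cases x <;> interval_cases y <;> simp_all <;> omega
  ext
  · exact hcomp.1
  · exact hcomp.2

@[simp] lemma mk_re (x y : ℤ) : (⟨x, y⟩ : GaussianInt).re = x := rfl
@[simp] lemma mk_im (x y : ℤ) : (⟨x, y⟩ : GaussianInt).im = y := rfl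

lemma sol_mul {n a b c d : ℕ} (h1 : a*d = b*c+1) (h2 : a*c+b*d = n) :
    (⟨(a:ℤ),(b:ℤ)⟩ : GaussianInt) * ⟨(d:ℤ),(c:ℤ)⟩ = zn n := by
  have h1' : (a:ℤ)*d = (b:ℤ)*c+1 := by exact_mod_cast h1
  have h2' : (a:ℤ)*c + (b:ℤ)*d = n := by exact_mod_cast h2
  ext
  · simp only [zn, Zsqrtd.re_mul]; linarith
  · simp only [zn, Zsqrtd.im_mul]; linarith

lemma sol_norm (c d : ℕ) :
    (⟨(d:ℤ),(c:ℤ)⟩ : GaussianInt).norm = ((c^2 + d^2 : ℕ) : ℤ) := by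
  simp only [Zsqrtd.norm]; push_cast; ring

lemma d_pos {a b c d : ℕ} (h1 : a*d = b*c+1) : 1 ≤ d := by
  rcases Nat.eq_zero_or_pos d with rfl | h
  · rw [Nat.mul_zero] at h1
    exact absurd h1.symm (Nat.succ_ne_zero _)
  · exact h

end CountSL2Aux

open CountSL2Aux in
theorem count_sl2_ac_add_bd (n : ℕ) :
    Set.ncard {x : ℕ × ℕ × ℕ × ℕ |
        x.1 * x.2.2.2 = x.2.1 * x.2.2.1 + 1 ∧ x.1 * x.2.2.1 + x.2.1 * x.2.2.2 = n} =
      (n^2 + 1).divisors.card := by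
  classical
  have hbij : Set.BijOn (fun x : ℕ × ℕ × ℕ × ℕ => x.2.2.1^2 + x.2.2.2^2)
      {x : ℕ × ℕ × ℕ × ℕ |
        x.1 * x.2.2.2 = x.2.1 * x.2.2.1 + 1 ∧ x.1 * x.2.2.1 + x.2.1 * x.2.2.2 = n}
      ↑((n^2 + 1).divisors) := by
    refine ⟨?_, ?_, ?_⟩
    · rintro ⟨a,b,c,d⟩ ⟨h1, h2⟩
      dsimp only at h1 h2 ⊢
      have hw : (⟨(d:ℤ),(c:ℤ)⟩ : GaussianInt) ∣ zn n := Dvd.intro_left _ (sol_mul h1 h2)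
      have hnd := norm_dvd hw
      rw [sol_norm, norm_zn] at hnd
      have hdd : ((c^2+d^2 : ℕ) : ℤ) ∣ ((n^2+1 : ℕ) : ℤ) := by push_cast at hnd ⊢; exact hnd
      simp only [Finset.mem_coe, Nat.mem_divisors]
      exact ⟨by exact_mod_cast hdd, by positivity⟩
    · rintro ⟨a,b,c,d⟩ ⟨h1, h2⟩ ⟨a',b',c',d'⟩ ⟨h1', h2'⟩ hfe
      dsimp only at h1 h2 h1' h2' hfe
      have hw := sol_mul h1 h2
      have hw' := sol_mul h1' h2'
      have hdvd : (⟨(d:ℤ),(c:ℤ)⟩ : GaussianInt) ∣ zn n := Dvd.intro_left _ hw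
      have hdvd' : (⟨(d':ℤ),(c':ℤ)⟩ : GaussianInt) ∣ zn n := Dvd.intro_left _ hw'
      have hassoc := lemA n hdvd hdvd' (by rw [sol_norm, sol_norm]; exact_mod_cast hfe)
      have heq : (⟨(d:ℤ),(c:ℤ)⟩ : GaussianInt) = ⟨(d':ℤ),(c':ℤ)⟩ :=
        normd_unique hassoc
          ⟨by simp only [mk_re]; exact_mod_cast d_pos h1, by simp only [mk_im]; positivity⟩
          ⟨by simp only [mk_re]; exact_mod_cast d_pos h1', by simp only [mk_im]; positivity⟩
      have hdc : d = d' ∧ c = c' := by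
        rw [Zsqrtd.ext_iff] at heq
        simp only [mk_re, mk_im] at heq
        exact ⟨by exact_mod_cast heq.1, by exact_mod_cast heq.2⟩
      have hwne : (⟨(d:ℤ),(c:ℤ)⟩ : GaussianInt) ≠ 0 := by
        intro h0
        rw [Zsqrtd.ext_iff] at h0
        have hd := d_pos h1
        simp only [mk_re, mk_im, Zsqrtd.re_zero, Zsqrtd.im_zero] at h0
        have : (d:ℤ) = 0 := h0.1
        omega
      have hab : (⟨(a:ℤ),(b:ℤ)⟩ : GaussianInt) = ⟨(a':ℤ),(b':ℤ)⟩ := by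
        apply mul_right_cancel₀ hwne
        rw [hw, ← hw', heq]
      rw [Zsqrtd.ext_iff] at hab
      simp only [mk_re, mk_im] at hab
      simp only [Prod.mk.injEq]
      exact ⟨by exact_mod_cast hab.1, by exact_mod_cast hab.2, hdc.2, hdc.1⟩
    · rintro q hq
      simp only [Finset.mem_coe, Nat.mem_divisors] at hq
      have hq1 : 1 ≤ q := Nat.pos_of_mem_divisors (Nat.mem_divisors.mpr hq)
      have hqz : (q:ℤ) ∣ (n:ℤ)^2 + 1 := by
        have := Int.natCast_dvd_natCast.mpr hq.1
        push_cast at this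
        exact this
      obtain ⟨w, hwdvd, hwnorm⟩ := lemB n hqz
      have hwne : w ≠ 0 := by
        intro h0
        rw [h0] at hwnorm
        simp only [Zsqrtd.norm_zero] at hwnorm
        omega
      obtain ⟨w', hassoc, hnormd⟩ := exists_normd hwne
      have hD : 1 ≤ w'.re := hnormd.1
      have hC : 0 ≤ w'.im := hnormd.2
      have hw'dvd : w' ∣ zn n := (hassoc.symm.dvd).trans hwdvd
      have hw'norm : w'.norm = (q:ℤ) := by
        rw [← norm_eq_of_associated hassoc]; exact hwnorm
      obtain ⟨t, ht⟩ := hw'dvd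
      have hre : w'.re * t.re - w'.im * t.im = 1 := by
        have h := congrArg Zsqrtd.re ht
        simp only [Zsqrtd.re_mul] at h
        have hzr : (zn n).re = 1 := rfl
        rw [hzr] at h
        linarith
      have him : w'.re * t.im + w'.im * t.re = (n:ℤ) := by
        have h := congrArg Zsqrtd.im ht
        simp only [Zsqrtd.im_mul] at h
        have hzi : (zn n).im = (n:ℤ) := rfl
        rw [hzi] at h
        linarith
      have hnq : w'.re * w'.re + w'.im * w'.im = (q:ℤ) := by
        have h := hw'norm
        simp only [Zsqrtd.norm] at h
        linarith
      have hq1' : (1:ℤ) ≤ (q:ℤ) := by exact_mod_cast hq1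
      have hn0 : (0:ℤ) ≤ (n:ℤ) := Int.natCast_nonneg n
      have hA : 1 ≤ t.re := by
        by_contra hA0
        push_neg at hA0
        have key : t.re * (q:ℤ) = w'.re + (n:ℤ) * w'.im := by
          rw [← hnq]; linear_combination w'.re * hre + w'.im * him
        nlinarith [mul_nonneg hC hn0]
      have hB : 0 ≤ t.im := by
        by_contra hB0
        push_neg at hB0
        have hCB : w'.im * t.im ≤ 0 := mul_nonpos_of_nonneg_of_nonpos hC (by omega)
        have hDA : 1 ≤ w'.re * t.re := by nlinarith
        have hCB0 : w'.im * t.im = 0 := le_antisymm hCB (by linarith)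
        have hC0 : w'.im = 0 := by
          rcases mul_eq_zero.mp hCB0 with h | h
          · exact h
          · omega
        rw [hC0] at him
        simp only [zero_mul, add_zero] at him
        nlinarith
      have hA0 : (0:ℤ) ≤ t.re := by linarith
      have hD0 : (0:ℤ) ≤ w'.re := by linarith
      refine ⟨(t.re.toNat, t.im.toNat, w'.im.toNat, w'.re.toNat), ⟨?_, ?_⟩, ?_⟩ <;>
        dsimp only
      · zify
        rw [Int.toNat_of_nonneg hA0, Int.toNat_of_nonneg hB,
          Int.toNat_of_nonneg hC, Int.toNat_of_nonneg hD0]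
        linear_combination hre
      · zify
        rw [Int.toNat_of_nonneg hA0, Int.toNat_of_nonneg hB,
          Int.toNat_of_nonneg hC, Int.toNat_of_nonneg hD0]
        linear_combination him
      · zify
        rw [Int.toNat_of_nonneg hC, Int.toNat_of_nonneg hD0]
        linear_combination hnq
  have h1 := Set.ncard_image_of_injOn hbij.injOn
  have h2 := hbij.image_eq
  rw [← h1, h2, Set.ncard_coe_finset]
end

section
/- For every nonnegative integer n, the number of matrices [[a,b],[c,d]] in SL₂(ℕ₀) with ac + bc + bd = n equals τ(n² + n + 1), the number of positive divisors of n² + n + 1. -/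
/-!
For `ad = bc + 1` and `n = ac + bc + bd`, the identity
`4 (a² + ab + b²)(c² + cd + d²) = (2n + 1)² + 3 (ad - bc)²` gives
`(a² + ab + b²)(c² + cd + d²) = n² + n + 1`, so the norm of the first row is a divisor of
`n² + n + 1`; each divisor arises exactly once. Unless the matrix is the identity, the row of larger
norm dominates the other entrywise (equal norms would make `n² + n + 1` a square), and subtracting
the smaller row from it lowers `n` by the smaller norm. Conversely, adding the row of norm `f` to
the other one undoes this, so existence and uniqueness both follow by strong induction on `n`.
-/

def eisNorm (a b : ℕ) : ℕ := a ^ 2 + a * b + b ^ 2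

section

variable {a b c d : ℕ}

theorem eisNorm_comm (a b : ℕ) : eisNorm a b = eisNorm b a := by
  unfold eisNorm; ring

theorem eisNorm_le_eisNorm (hac : a ≤ c) (hbd : b ≤ d) : eisNorm a b ≤ eisNorm c d := by
  unfold eisNorm; gcongr

theorem eisNorm_mul_eisNorm (h : a * d = b * c + 1) :
    eisNorm a b * eisNorm c d = (a * c + b * c + b * d) ^ 2 + (a * c + b * c + b * d) + 1 := by
  have hz : (a * d : ℤ) = b * c + 1 := by exact_mod_cast h
  zify [eisNorm]
  linear_combination ((a * c + b * c + b * d : ℤ) + 2 + (a * d - b * c - 1)) * hz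

theorem eisNorm_add_add (h : a * d = b * c + 1) :
    eisNorm (a + c) (b + d) = eisNorm a b + 2 * (a * c + b * c + b * d) + 1 + eisNorm c d := by
  unfold eisNorm; linear_combination h

theorem eq_zero_of_mul_self_eq_sq_add_add_one {e n : ℕ} (h : e * e = n ^ 2 + n + 1) : n = 0 := by
  rcases le_or_gt e n with hen | hne <;> nlinarith

theorem eisNorm_pos_of_mul_eq (h : a * d = b * c + 1) : 0 < eisNorm a b ∧ 0 < eisNorm c d :=
  CanonicallyOrderedAdd.mul_pos.1 (by rw [eisNorm_mul_eisNorm h]; positivity)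

theorem eq_one_of_mul_eq_mul_add_one_of_add_eq_zero (h : a * d = b * c + 1)
    (h0 : a * c + b * c + b * d = 0) : a = 1 ∧ b = 0 ∧ c = 0 ∧ d = 1 := by
  have ha : a ≠ 0 := by rintro rfl; simp at h
  have hd : d ≠ 0 := by rintro rfl; simp at h
  simp only [Nat.add_eq_zero_iff, mul_eq_zero, ha, hd, false_or, or_false] at h0
  obtain ⟨⟨rfl, -⟩, rfl⟩ := h0
  simpa using h

theorem rows_comparable_of_mul_eq_mul_add_one (h : a * d = b * c + 1) :
    (c ≤ a ∧ d ≤ b) ∨ (a ≤ c ∧ b ≤ d) ∨ (b = 0 ∧ c = 0) := by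
  rcases le_or_gt c a with hca | hac <;> rcases le_or_gt d b with hdb | hbd
  · exact .inl ⟨hca, hdb⟩
  · rcases hca.eq_or_lt with rfl | hca
    · exact .inr (.inl ⟨le_rfl, hbd.le⟩)
    · right; right; constructor <;> nlinarith
  · nlinarith
  · exact .inr (.inl ⟨hac.le, hbd.le⟩)

theorem rows_le_of_eisNorm_le (h : a * d = b * c + 1) (hn : 0 < a * c + b * c + b * d)
    (hle : eisNorm c d ≤ eisNorm a b) : c ≤ a ∧ d ≤ b := by
  rcases rows_comparable_of_mul_eq_mul_add_one h with hrows | ⟨hac, hbd⟩ | ⟨rfl, rfl⟩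
  · exact hrows
  · have hnorm := eisNorm_mul_eisNorm h
    rw [le_antisymm (eisNorm_le_eisNorm hac hbd) hle] at hnorm
    exact absurd (eq_zero_of_mul_self_eq_sq_add_add_one hnorm) hn.ne'
  · simp at hn

end

theorem exists_sl2_of_mul_eq (n : ℕ) : ∀ e f : ℕ, e * f = n ^ 2 + n + 1 →
    ∃ a b c d : ℕ, a * d = b * c + 1 ∧ a * c + b * c + b * d = n ∧
      eisNorm a b = e ∧ eisNorm c d = f := by
  induction n using Nat.strong_induction_on with
  | _ n ih =>
  intro e f hef
  wlog hfe : f ≤ e generalizing e f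
  · obtain ⟨a, b, c, d, h, hn, ha, hc⟩ := this f e (by rw [mul_comm, hef]) (le_of_not_ge hfe)
    exact ⟨d, c, b, a, by linarith, by linarith, by rwa [eisNorm_comm], by rwa [eisNorm_comm]⟩
  rcases Nat.eq_zero_or_pos n with rfl | hn
  · obtain ⟨rfl, rfl⟩ := mul_eq_one.1 hef
    exact ⟨1, 0, 0, 1, rfl, rfl, rfl, rfl⟩
  have hf : 0 < f := (CanonicallyOrderedAdd.mul_pos.1 (by rw [hef]; positivity)).2
  obtain ⟨k, rfl⟩ : ∃ k, n = k + f := Nat.exists_eq_add_of_le' (by nlinarith)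
  -- `(k + f)² + (k + f) + 1 ≡ k² + k + 1 [MOD f]`
  obtain ⟨e', he'⟩ : f ∣ k ^ 2 + k + 1 := by
    refine (Nat.dvd_add_left (dvd_mul_right f (2 * k + f + 1))).1 ?_
    exact ⟨e, by rw [mul_comm f e, hef]; ring⟩
  obtain ⟨a, b, c, d, h, hk, ha, hc⟩ := ih k (by omega) e' f (by rw [he', mul_comm])
  have h' : (a + c) * d = (b + d) * c + 1 := by linarith
  have hk' : (a + c) * c + (b + d) * c + (b + d) * d = k + f := by
    rw [← hk, ← hc, eisNorm]; ring
  refine ⟨a + c, b + d, c, d, h', hk', Nat.eq_of_mul_eq_mul_right hf ?_, hc⟩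
  rw [hef, ← hk', ← eisNorm_mul_eisNorm h', hc]

theorem eq_of_sl2_of_eisNorm_eq {n a b c d a' b' c' d' : ℕ}
    (h : a * d = b * c + 1) (h' : a' * d' = b' * c' + 1)
    (hn : a * c + b * c + b * d = n) (hn' : a' * c' + b' * c' + b' * d' = n)
    (hQ : eisNorm a b = eisNorm a' b') : a = a' ∧ b = b' ∧ c = c' ∧ d = d' := by
  induction n using Nat.strong_induction_on generalizing a b c d a' b' c' d' with
  | _ n ih =>
  have hQ₂ : eisNorm c d = eisNorm c' d' := by
    refine Nat.eq_of_mul_eq_mul_left (eisNorm_pos_of_mul_eq h).1 ?_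
    rw [eisNorm_mul_eisNorm h, hQ, eisNorm_mul_eisNorm h', hn, hn']
  wlog hle : eisNorm c d ≤ eisNorm a b generalizing a b c d a' b' c' d'
  · obtain ⟨rfl, rfl, rfl, rfl⟩ := this (a := d) (b := c) (c := b) (d := a) (a' := d') (b' := c')
      (c' := b') (d' := a') (by linarith) (by linarith) (by linarith) (by linarith)
      (by rwa [eisNorm_comm, eisNorm_comm d']) (by rwa [eisNorm_comm, eisNorm_comm b'])
      (by rw [eisNorm_comm d, eisNorm_comm b]; exact (not_le.1 hle).le)
    exact ⟨rfl, rfl, rfl, rfl⟩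
  rcases Nat.eq_zero_or_pos n with rfl | hn₀
  · obtain ⟨rfl, rfl, rfl, rfl⟩ := eq_one_of_mul_eq_mul_add_one_of_add_eq_zero h hn
    obtain ⟨rfl, rfl, rfl, rfl⟩ := eq_one_of_mul_eq_mul_add_one_of_add_eq_zero h' hn'
    exact ⟨rfl, rfl, rfl, rfl⟩
  obtain ⟨hca, hdb⟩ := rows_le_of_eisNorm_le h (hn ▸ hn₀) hle
  obtain ⟨hca', hdb'⟩ := rows_le_of_eisNorm_le h' (hn' ▸ hn₀) (hQ₂ ▸ hQ ▸ hle)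
  obtain ⟨a₀, rfl⟩ := Nat.exists_eq_add_of_le' hca
  obtain ⟨b₀, rfl⟩ := Nat.exists_eq_add_of_le' hdb
  obtain ⟨a₀', rfl⟩ := Nat.exists_eq_add_of_le' hca'
  obtain ⟨b₀', rfl⟩ := Nat.exists_eq_add_of_le' hdb'
  have h₀ : a₀ * d = b₀ * c + 1 := by linarith
  have h₀' : a₀' * d' = b₀' * c' + 1 := by linarith
  have hm : a₀ * c + b₀ * c + b₀ * d + eisNorm c d = n := by rw [← hn, eisNorm]; ring
  have hm' : a₀' * c' + b₀' * c' + b₀' * d' + eisNorm c' d' = n := by rw [← hn', eisNorm]; ring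
  have hQ₀ : eisNorm a₀ b₀ = eisNorm a₀' b₀' := by
    have := eisNorm_add_add h₀
    have := eisNorm_add_add h₀'
    omega
  have hcd := (eisNorm_pos_of_mul_eq h).2
  obtain ⟨rfl, rfl, rfl, rfl⟩ := ih _ (by omega) h₀ h₀' rfl (by omega) hQ₀
  exact ⟨rfl, rfl, rfl, rfl⟩

theorem count_sl2_ac_add_bc_add_bd (n : ℕ) :
    Set.ncard {x : ℕ × ℕ × ℕ × ℕ |
        x.1 * x.2.2.2 = x.2.1 * x.2.2.1 + 1 ∧
          x.1 * x.2.2.1 + x.2.1 * x.2.2.1 + x.2.1 * x.2.2.2 = n} =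
      (n^2 + n + 1).divisors.card := by
  rw [← Set.ncard_coe_finset]
  refine Set.ncard_congr (fun x _ => eisNorm x.1 x.2.1) ?_ ?_ ?_
  · rintro ⟨a, b, c, d⟩ ⟨h, rfl⟩
    rw [Finset.mem_coe, Nat.mem_divisors]
    exact ⟨Dvd.intro _ (eisNorm_mul_eisNorm h), by positivity⟩
  · rintro ⟨a, b, c, d⟩ ⟨a', b', c', d'⟩ ⟨h, hn⟩ ⟨h', hn'⟩ hQ
    obtain ⟨rfl, rfl, rfl, rfl⟩ := eq_of_sl2_of_eisNorm_eq h h' hn hn' hQ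
    rfl
  · intro e he
    obtain ⟨f, hf⟩ := (Nat.mem_divisors.1 he).1
    obtain ⟨a, b, c, d, h, hn, rfl, -⟩ := exists_sl2_of_mul_eq n e f hf.symm
    exact ⟨(a, b, c, d), ⟨h, hn⟩, rfl⟩
end

section
/- For every pair (m, n) of nonnegative integers with m ≠ 0, m ≠ 1, m dividing n² + 1 and (m,n) ≠ (1,0): exactly one of the inequalities n ≥ m and n ≥ (n² + 1)/m holds; equivalently min{m, (n²+1)/m} ≤ n < max{m, (n²+1)/m}. -/
section MulEqSqAddOne

variable {m k n : ℕ}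

theorem not_le_and_le_of_mul_eq_sq_add_one (h : m * k = n ^ 2 + 1) : ¬(m ≤ n ∧ k ≤ n) := by
  rintro ⟨hm, hk⟩
  have : n ^ 2 + 1 ≤ n ^ 2 := h ▸ sq n ▸ Nat.mul_le_mul hm hk
  omega

theorem le_or_le_of_mul_eq_sq_add_one (h : m * k = n ^ 2 + 1) (hne : (m, n) ≠ (1, 0)) :
    m ≤ n ∨ k ≤ n := by
  by_contra! ⟨hm, hk⟩
  have hsq : (n + 1) ^ 2 ≤ n ^ 2 + 1 := h ▸ sq (n + 1) ▸ Nat.mul_le_mul hm hk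
  have hn : n = 0 := by nlinarith
  subst hn
  exact hne (by simpa using Nat.eq_one_of_mul_eq_one_right h)

end MulEqSqAddOne

theorem phi0_enumerable_condition_general (m n : ℕ)
    (hdvd : m ∣ n^2 + 1) (hne : (m, n) ≠ (1, 0)) :
    Xor' (m ≤ n) ((n^2 + 1)/m ≤ n) ∧
      (min m ((n^2 + 1)/m) ≤ n ∧ n < max m ((n^2 + 1)/m)) := by
  have hmul : m * ((n ^ 2 + 1) / m) = n ^ 2 + 1 := Nat.mul_div_cancel' hdvd
  have hone := le_or_le_of_mul_eq_sq_add_one hmul hne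
  have hnotboth := not_le_and_le_of_mul_eq_sq_add_one hmul
  refine ⟨xor_iff_or_and_not_and _ _ |>.2 ⟨hone, hnotboth⟩, min_le_iff.2 hone, lt_max_iff.2 ?_⟩
  simpa only [not_and_or, not_le] using hnotboth

theorem phi0_enumerable_condition (m n : ℕ) (hm0 : m ≠ 0) (hm1 : m ≠ 1)
    (hdvd : m ∣ n^2 + 1) (hne : (m, n) ≠ (1, 0)) :
    Xor' (m ≤ n) ((n^2 + 1)/m ≤ n) ∧
      (min m ((n^2 + 1)/m) ≤ n ∧ n < max m ((n^2 + 1)/m)) :=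
  phi0_enumerable_condition_general m n hdvd hne
end

section
/- Define the sequence S : ℕ → ℕ by S(1) = 0, S(2) = 1, S(3) = 1, and for k ≥ 1: S(4k) = 2S(2k) − S(k), S(4k+1) = 2S(2k) + S(2k+1), S(4k+2) = 2S(2k+1) + S(2k), S(4k+3) = 2S(2k+1) − S(k). Then for every n ∈ ℕ₀, the number of indices k ∈ ℕ with S(k) = n equals τ(n² + 1), the number of positive divisors of n² + 1. Moreover (S(2k) − S(k)) divides S(k)² + 1 for all k ≥ 1. -/
/-- The sequence `𝒮` reading off the second components of the divisor pair tree
for `n² + 1`, defined by `𝒮(1) = 0`, `𝒮(2) = 1`, `𝒮(3) = 1` and, for `k ≥ 1`,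
`𝒮(4k) = 2𝒮(2k) − 𝒮(k)`, `𝒮(4k+1) = 2𝒮(2k) + 𝒮(2k+1)`,
`𝒮(4k+2) = 2𝒮(2k+1) + 𝒮(2k)`, `𝒮(4k+3) = 2𝒮(2k+1) − 𝒮(k)`. -/
def sternLike : ℕ → ℕ
  | 0 => 0
  | 1 => 0
  | 2 => 1
  | 3 => 1
  | n + 4 =>
    if (n + 4) % 4 = 0 then 2 * sternLike ((n + 4) / 2) - sternLike ((n + 4) / 4)
    else if (n + 4) % 4 = 1 then 2 * sternLike ((n + 4) / 2) + sternLike ((n + 4) / 2 + 1)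
    else if (n + 4) % 4 = 2 then 2 * sternLike ((n + 4) / 2) + sternLike ((n + 4) / 2 - 1)
    else 2 * sternLike ((n + 4) / 2) - sternLike ((n + 4) / 4)
  decreasing_by all_goals omega

/-!
Attach to each node `k ≥ 1` the triple `(a, b, c) = (S(2k) − S(k), S(k), S(2k+1) − S(k))`.
The recurrences say exactly that the root carries `(1, 0, 1)` and that the children of `(a, b, c)`
carry `(a, a + b, a + 2b + c)` and `(a + 2b + c, b + c, c)`: the two Stern–Brocot substitutions
acting on the form `a x² + 2bxy + c y²`, so the determinant `ac − b² = 1` is preserved.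
Conversely a triple with `ac = b² + 1` and `b > 0` is a child of a triple with smaller `b`:
since `ac < (b + 1)²`, one of `a ≤ b`, `c ≤ b` holds and tells which child it is.
So the nodes enumerate these triples bijectively, and the fibre of `S` over `n` is in bijection
with the divisors `a` of `n² + 1`.
-/

theorem Nat.eq_one_or_exists_two_mul {k : ℕ} (hk : 0 < k) :
    k = 1 ∨ ∃ i, 0 < i ∧ (k = 2 * i ∨ k = 2 * i + 1) := by
  obtain ⟨i, rfl | rfl⟩ := Nat.even_or_odd' k
  · exact .inr ⟨i, by omega, .inl rfl⟩
  · rcases Nat.eq_zero_or_pos i with rfl | hi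
    · exact .inl rfl
    · exact .inr ⟨i, hi, .inr rfl⟩

@[elab_as_elim]
theorem Nat.induction_from_one_two_mul {P : ∀ k, 0 < k → Prop} (one : P 1 Nat.one_pos)
    (two_mul : ∀ k (hk : 0 < k), P k hk → P (2 * k) (by omega))
    (two_mul_add_one : ∀ k (hk : 0 < k), P k hk → P (2 * k + 1) (by omega)) :
    ∀ k (hk : 0 < k), P k hk := by
  intro k
  induction k using Nat.strong_induction_on with
  | _ k ih =>
    intro hk
    obtain rfl | ⟨i, hi, rfl | rfl⟩ := Nat.eq_one_or_exists_two_mul hk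
    · exact one
    · exact two_mul i hi (ih i (by omega) hi)
    · exact two_mul_add_one i hi (ih i (by omega) hi)

@[ext]
structure DivisorTriple where
  a : ℕ
  b : ℕ
  c : ℕ

namespace DivisorTriple

def IsUnimodular (t : DivisorTriple) : Prop := t.a * t.c = t.b ^ 2 + 1

def root : DivisorTriple := ⟨1, 0, 1⟩

def left (t : DivisorTriple) : DivisorTriple := ⟨t.a, t.a + t.b, t.a + 2 * t.b + t.c⟩

def right (t : DivisorTriple) : DivisorTriple := ⟨t.a + 2 * t.b + t.c, t.b + t.c, t.c⟩

variable {t s : DivisorTriple}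

theorem isUnimodular_root : root.IsUnimodular := rfl

theorem IsUnimodular.left (ht : t.IsUnimodular) : t.left.IsUnimodular := by
  simp only [IsUnimodular, DivisorTriple.left] at ht ⊢
  linear_combination ht

theorem IsUnimodular.right (ht : t.IsUnimodular) : t.right.IsUnimodular := by
  simp only [IsUnimodular, DivisorTriple.right] at ht ⊢
  linear_combination ht

theorem IsUnimodular.a_pos (ht : t.IsUnimodular) : 0 < t.a :=
  Nat.pos_of_ne_zero fun h => by simp [IsUnimodular, h] at ht

theorem IsUnimodular.c_pos (ht : t.IsUnimodular) : 0 < t.c :=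
  Nat.pos_of_ne_zero fun h => by simp [IsUnimodular, h] at ht

theorem IsUnimodular.two_mul_b_lt_a_add_c (ht : t.IsUnimodular) : 2 * t.b < t.a + t.c := by
  unfold IsUnimodular at ht
  nlinarith [sq_nonneg ((t.a : ℤ) - t.c)]

theorem IsUnimodular.a_le_b_or_c_le_b (ht : t.IsUnimodular) (hb : 0 < t.b) :
    t.a ≤ t.b ∨ t.c ≤ t.b := by
  unfold IsUnimodular at ht
  by_contra! h
  nlinarith [Nat.mul_le_mul h.1 h.2]

theorem IsUnimodular.c_eq (ht : t.IsUnimodular) (hs : s.IsUnimodular) (ha : t.a = s.a)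
    (hb : t.b = s.b) : t.c = s.c := by
  refine Nat.eq_of_mul_eq_mul_left ht.a_pos ?_
  rw [ht, hb, ← hs, ha]

theorem IsUnimodular.eq_root (ht : t.IsUnimodular) (hb : t.b = 0) : t = root := by
  unfold IsUnimodular at ht
  rw [hb, zero_pow two_ne_zero, zero_add, mul_eq_one] at ht
  ext <;> simp [root, ht, hb]

theorem exists_parent (ht : t.IsUnimodular) (hb : 0 < t.b) :
    ∃ s : DivisorTriple, s.IsUnimodular ∧ s.b < t.b ∧ (t = s.left ∨ t = s.right) := by
  have hac := ht.two_mul_b_lt_a_add_c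
  have ha := ht.a_pos
  have hc := ht.c_pos
  rcases ht.a_le_b_or_c_le_b hb with hab | hcb
  · refine ⟨⟨t.a, t.b - t.a, t.c + t.a - 2 * t.b⟩, ?_, by dsimp only; omega, ?_⟩
    · unfold IsUnimodular at ht ⊢
      zify [hab, (by omega : 2 * t.b ≤ t.c + t.a)] at ht ⊢
      linear_combination ht
    · left
      ext <;> simp only [DivisorTriple.left] <;> omega
  · refine ⟨⟨t.a + t.c - 2 * t.b, t.b - t.c, t.c⟩, ?_, by dsimp only; omega, ?_⟩
    · unfold IsUnimodular at ht ⊢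
      zify [hcb, hac.le] at ht ⊢
      linear_combination ht
    · right
      ext <;> simp only [DivisorTriple.right] <;> omega

theorem left_injective : Function.Injective left := by
  intro s s' h
  simp only [DivisorTriple.left, DivisorTriple.mk.injEq] at h
  ext <;> omega

theorem right_injective : Function.Injective right := by
  intro s s' h
  simp only [DivisorTriple.right, DivisorTriple.mk.injEq] at h
  ext <;> omega

theorem left_ne_right (hs : s.IsUnimodular) : t.left ≠ s.right := by
  intro h
  simp only [DivisorTriple.left, DivisorTriple.right, DivisorTriple.mk.injEq] at h
  have := hs.a_pos
  omega

theorem left_ne_root (ht : t.IsUnimodular) : t.left ≠ root := by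
  intro h
  simp only [DivisorTriple.left, root, DivisorTriple.mk.injEq] at h
  have := ht.a_pos
  omega

theorem right_ne_root (ht : t.IsUnimodular) : t.right ≠ root := by
  intro h
  simp only [DivisorTriple.right, root, DivisorTriple.mk.injEq] at h
  have := ht.c_pos
  omega

end DivisorTriple

section Recurrences

variable {k : ℕ}

@[simp] theorem sternLike_one : sternLike 1 = 0 := by simp [sternLike]

@[simp] theorem sternLike_two : sternLike 2 = 1 := by simp [sternLike]

@[simp] theorem sternLike_three : sternLike 3 = 1 := by simp [sternLike]

theorem sternLike_four_mul (hk : 0 < k) :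
    sternLike (4 * k) = 2 * sternLike (2 * k) - sternLike k := by
  rw [show 4 * k = (4 * k - 4) + 4 by omega, sternLike, if_pos (by omega),
    show (4 * k - 4 + 4) / 2 = 2 * k by omega, show (4 * k - 4 + 4) / 4 = k by omega]

theorem sternLike_four_mul_add_one (hk : 0 < k) :
    sternLike (4 * k + 1) = 2 * sternLike (2 * k) + sternLike (2 * k + 1) := by
  rw [show 4 * k + 1 = (4 * k - 3) + 4 by omega, sternLike, if_neg (by omega), if_pos (by omega),
    show (4 * k - 3 + 4) / 2 = 2 * k by omega]

theorem sternLike_four_mul_add_two (hk : 0 < k) :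
    sternLike (4 * k + 2) = 2 * sternLike (2 * k + 1) + sternLike (2 * k) := by
  rw [show 4 * k + 2 = (4 * k - 2) + 4 by omega, sternLike, if_neg (by omega), if_neg (by omega),
    if_pos (by omega), show (4 * k - 2 + 4) / 2 = 2 * k + 1 by omega,
    show 2 * k + 1 - 1 = 2 * k by omega]

theorem sternLike_four_mul_add_three (hk : 0 < k) :
    sternLike (4 * k + 3) = 2 * sternLike (2 * k + 1) - sternLike k := by
  rw [show 4 * k + 3 = (4 * k - 1) + 4 by omega, sternLike, if_neg (by omega), if_neg (by omega),
    if_neg (by omega), show (4 * k - 1 + 4) / 2 = 2 * k + 1 by omega,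
    show (4 * k - 1 + 4) / 4 = k by omega]

end Recurrences

theorem sternLike_le_two_mul_and_two_mul_add_one {k : ℕ} (hk : 0 < k) :
    sternLike k ≤ sternLike (2 * k) ∧ sternLike k ≤ sternLike (2 * k + 1) := by
  induction k, hk using Nat.induction_from_one_two_mul with
  | one => simp
  | two_mul k hk ih =>
    rw [show 2 * (2 * k) = 4 * k by ring, sternLike_four_mul hk, sternLike_four_mul_add_one hk]
    omega
  | two_mul_add_one k hk ih =>
    rw [show 2 * (2 * k + 1) = 4 * k + 2 by ring, sternLike_four_mul_add_two hk,
      show 4 * k + 2 + 1 = 4 * k + 3 by ring, sternLike_four_mul_add_three hk]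
    omega

namespace sternLike

open DivisorTriple

def triple (k : ℕ) : DivisorTriple :=
  ⟨sternLike (2 * k) - sternLike k, sternLike k, sternLike (2 * k + 1) - sternLike k⟩

theorem triple_one : triple 1 = root := by
  ext <;> simp [triple, root]

theorem triple_two_mul {k : ℕ} (hk : 0 < k) : triple (2 * k) = (triple k).left := by
  have := sternLike_le_two_mul_and_two_mul_add_one hk
  ext <;> simp only [triple, DivisorTriple.left, show 2 * (2 * k) = 4 * k by ring,
    sternLike_four_mul hk, sternLike_four_mul_add_one hk] <;> omega

theorem triple_two_mul_add_one {k : ℕ} (hk : 0 < k) :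
    triple (2 * k + 1) = (triple k).right := by
  have := sternLike_le_two_mul_and_two_mul_add_one hk
  ext <;> simp only [triple, DivisorTriple.right, show 2 * (2 * k + 1) = 4 * k + 2 by ring,
    show 4 * k + 2 + 1 = 4 * k + 3 by ring, sternLike_four_mul_add_two hk,
    sternLike_four_mul_add_three hk] <;> omega

theorem isUnimodular_triple {k : ℕ} (hk : 0 < k) : (triple k).IsUnimodular := by
  induction k, hk using Nat.induction_from_one_two_mul with
  | one => exact triple_one ▸ isUnimodular_root
  | two_mul k hk ih => exact triple_two_mul hk ▸ ih.left
  | two_mul_add_one k hk ih => exact triple_two_mul_add_one hk ▸ ih.right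

theorem exists_triple_eq {t : DivisorTriple} (ht : t.IsUnimodular) :
    ∃ k, 0 < k ∧ triple k = t := by
  induction hb : t.b using Nat.strong_induction_on generalizing t with
  | _ b ih =>
    rcases Nat.eq_zero_or_pos b with rfl | hb0
    · exact ⟨1, one_pos, triple_one.trans (ht.eq_root hb).symm⟩
    obtain ⟨s, hs, hsb, rfl | rfl⟩ := exists_parent ht (hb ▸ hb0) <;>
      obtain ⟨k, hk, rfl⟩ := ih s.b (hb ▸ hsb) hs rfl
    · exact ⟨2 * k, by omega, triple_two_mul hk⟩
    · exact ⟨2 * k + 1, by omega, triple_two_mul_add_one hk⟩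

theorem triple_injOn : Set.InjOn triple {k | 0 < k} := by
  intro j (hj : 0 < j) k (hk : 0 < k) h
  induction j, hj using Nat.induction_from_one_two_mul generalizing k with
  | one =>
    obtain rfl | ⟨i, hi, rfl | rfl⟩ := Nat.eq_one_or_exists_two_mul hk
    · rfl
    · rw [triple_one, triple_two_mul hi] at h
      exact (left_ne_root (isUnimodular_triple hi) h.symm).elim
    · rw [triple_one, triple_two_mul_add_one hi] at h
      exact (right_ne_root (isUnimodular_triple hi) h.symm).elim
  | two_mul j hj ih =>
    obtain rfl | ⟨i, hi, rfl | rfl⟩ := Nat.eq_one_or_exists_two_mul hk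
    · rw [triple_one, triple_two_mul hj] at h
      exact (left_ne_root (isUnimodular_triple hj) h).elim
    · rw [triple_two_mul hj, triple_two_mul hi] at h
      rw [ih hi (left_injective h)]
    · rw [triple_two_mul hj, triple_two_mul_add_one hi] at h
      exact (left_ne_right (isUnimodular_triple hi) h).elim
  | two_mul_add_one j hj ih =>
    obtain rfl | ⟨i, hi, rfl | rfl⟩ := Nat.eq_one_or_exists_two_mul hk
    · rw [triple_one, triple_two_mul_add_one hj] at h
      exact (right_ne_root (isUnimodular_triple hj) h).elim
    · rw [triple_two_mul_add_one hj, triple_two_mul hi] at h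
      exact (left_ne_right (isUnimodular_triple hj) h.symm).elim
    · rw [triple_two_mul_add_one hj, triple_two_mul_add_one hi] at h
      rw [ih hi (right_injective h)]

end sternLike

theorem sternLike_fiber_and_divisibility :
    (∀ n : ℕ, Set.ncard {k : ℕ | 1 ≤ k ∧ sternLike k = n} = (n^2 + 1).divisors.card) ∧
      (∀ k : ℕ, 1 ≤ k → (sternLike (2*k) - sternLike k) ∣ sternLike k ^ 2 + 1) := by
  refine ⟨fun n => ?_, fun k hk => Dvd.intro _ (sternLike.isUnimodular_triple hk)⟩
  rw [← Set.ncard_coe_finset]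
  refine Set.ncard_congr (fun k _ => (sternLike.triple k).a) ?maps ?inj ?surj
  case maps =>
    rintro k ⟨hk, rfl⟩
    exact Nat.mem_divisors.2 ⟨Dvd.intro _ (sternLike.isUnimodular_triple hk), by positivity⟩
  case inj =>
    rintro j k ⟨hj, rfl⟩ ⟨hk, hjk⟩ ha
    have hc := (sternLike.isUnimodular_triple hj).c_eq
      (sternLike.isUnimodular_triple hk) ha hjk.symm
    exact sternLike.triple_injOn hj hk (DivisorTriple.ext ha hjk.symm hc)
  case surj =>
    intro d hd
    have ht : DivisorTriple.IsUnimodular ⟨d, n, (n ^ 2 + 1) / d⟩ :=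
      Nat.mul_div_cancel' (Nat.dvd_of_mem_divisors hd)
    obtain ⟨k, hk, hkt⟩ := sternLike.exists_triple_eq ht
    exact ⟨k, ⟨hk, congrArg DivisorTriple.b hkt⟩, congrArg DivisorTriple.a hkt⟩
end
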